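/- arXiv:2311.02582 — 2 statements merged into one kernel-verified Lean document; each statement's English description precedes it below -/
import Mathlib

section
/- Dorfman's procedure bound: for E items with f defectives (1 ≤ f ≤ E), partitioning into ⌈√(Ef)⌉ groups each of size at most ⌈√(E/f)⌉ and testing each group, then individually testing all members of positive groups, uses at most √(Ef) + f·√(E/f) = 2√(Ef) tests (as real numbers, up to ceiling corrections: the test count is at most ⌈√(Ef)⌉ + f·⌈√(E/f)⌉). -/
namespace Finset

variable {ι α : Type*} [DecidableEq α]

/-- Each member of the family meeting `D` contains a point of `D`, and disjointness makes
these points distinct. -/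
theorem card_filter_inter_nonempty_le_card (s : Finset ι) (g : ι → Finset α)
    (hg : (s : Set ι).PairwiseDisjoint g) (D : Finset α) :
    #(s.filter fun i => (g i ∩ D).Nonempty) ≤ #D := by
  set P := s.filter fun i => (g i ∩ D).Nonempty
  have hdisj : (P : Set ι).PairwiseDisjoint fun i => g i ∩ D :=
    (hg.subset (coe_subset.mpr (filter_subset _ s))).mono fun _ => inter_subset_left
  calc #P = ∑ _ ∈ P, 1 := card_eq_sum_ones P
    _ ≤ ∑ i ∈ P, #(g i ∩ D) :=
        sum_le_sum fun i hi => card_pos.mpr (mem_filter.mp hi).2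
    _ = #(P.biUnion fun i => g i ∩ D) := (card_biUnion hdisj).symm
    _ ≤ #D := card_le_card (biUnion_subset.mpr fun _ _ => inter_subset_right)

theorem sum_card_filter_inter_nonempty_le (s : Finset ι) (g : ι → Finset α)
    (hg : (s : Set ι).PairwiseDisjoint g) (D : Finset α) {b : ℕ} (hb : ∀ i ∈ s, #(g i) ≤ b) :
    ∑ i ∈ s.filter (fun i => (g i ∩ D).Nonempty), #(g i) ≤ #D * b :=
  calc ∑ i ∈ s.filter (fun i => (g i ∩ D).Nonempty), #(g i)
      ≤ #(s.filter fun i => (g i ∩ D).Nonempty) * b :=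
        sum_le_card_nsmul _ _ _ fun i hi => hb i (mem_filter.mp hi).1
    _ ≤ #D * b := Nat.mul_le_mul_right b (card_filter_inter_nonempty_le_card s g hg D)

end Finset

theorem dorfman_test_count_bound_general (E f : ℕ)
    (D : Finset (Fin E)) (hD : D.card = f)
    (groups : Fin (⌈Real.sqrt ((E : ℝ) * f)⌉₊) → Finset (Fin E))
    (hdisj : ∀ i j, i ≠ j → Disjoint (groups i) (groups j))
    (hsize : ∀ i, (groups i).card ≤ ⌈Real.sqrt ((E : ℝ) / f)⌉₊) :
    ⌈Real.sqrt ((E : ℝ) * f)⌉₊ +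
        ∑ i ∈ Finset.univ.filter (fun i => ((groups i) ∩ D).Nonempty), (groups i).card ≤
      ⌈Real.sqrt ((E : ℝ) * f)⌉₊ + f * ⌈Real.sqrt ((E : ℝ) / f)⌉₊ := by
  have hsum := Finset.sum_card_filter_inter_nonempty_le Finset.univ groups
    (fun i _ j _ hij => hdisj i j hij) D fun i _ => hsize i
  rw [hD] at hsum
  exact Nat.add_le_add_left hsum _

/-- Dorfman's procedure bound: with `E` items and `f` defectives (`1 ≤ f ≤ E`),
partitioning into `⌈√(Ef)⌉` pairwise disjoint groups of size at most `⌈√(E/f)⌉`,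
testing every group and then individually testing all members of positive groups
uses at most `⌈√(Ef)⌉ + f * ⌈√(E/f)⌉` tests. -/
theorem dorfman_test_count_bound (E f : ℕ) (hf : 1 ≤ f) (hfE : f ≤ E)
    (D : Finset (Fin E)) (hD : D.card = f)
    (groups : Fin (⌈Real.sqrt ((E : ℝ) * f)⌉₊) → Finset (Fin E))
    (hdisj : ∀ i j, i ≠ j → Disjoint (groups i) (groups j))
    (hsize : ∀ i, (groups i).card ≤ ⌈Real.sqrt ((E : ℝ) / f)⌉₊) :
    ⌈Real.sqrt ((E : ℝ) * f)⌉₊ +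
        ∑ i ∈ Finset.univ.filter (fun i => ((groups i) ∩ D).Nonempty), (groups i).card ≤
      ⌈Real.sqrt ((E : ℝ) * f)⌉₊ + f * ⌈Real.sqrt ((E : ℝ) / f)⌉₊ :=
  dorfman_test_count_bound_general E f D hD groups hdisj hsize
end

section
/- If an (m+1)×b matrix C satisfies C = U·B for U the first m columns of a Vandermonde matrix V on distinct nodes, and additionally a perturbed matrix C' = C + E has last-row test S_{m+1}·C' = 0 where S = V^{-1}, then S_{m+1}·E = 0; in particular if E has exactly one nonzero row then the test detects it (S_{m+1}·C' ≠ 0), since every entry of the last row of S is nonzero. -/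
/-! Since `V⁻¹ V = 1`, the last row of `S = V⁻¹` annihilates the first `m` columns of `V`, which
are the columns of `U`; so the last-row test sees only `S_{m+1} E = S_{m+1,i₀} • E_{i₀}`.
The coefficient `S_{m+1,i₀}` is nonzero: a row vector annihilating the first `m` columns of `V`
with a zero entry at `i₀` annihilates the `m × m` Vandermonde matrix of the remaining nodes,
hence vanishes, contradicting `S_{m+1} V = e_{m+1}`. -/

open Matrix

namespace Matrix

theorem mul_apply_eq_smul_of_forall_ne_row_eq_zero {l n o α : Type*} [Fintype n] [Semiring α]
    (A : Matrix l n α) {E : Matrix n o α} {i₀ : n} (hE : ∀ i, i ≠ i₀ → E i = 0) (k : l) :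
    (A * E) k = A k i₀ • E i₀ := by
  rw [mul_apply_eq_vecMul, vecMul_eq_sum,
    Finset.sum_eq_single i₀ (fun i _ hi => by rw [hE i hi, smul_zero]) (by simp)]

section Vandermonde

variable {R : Type*} [CommRing R] {m : ℕ} {x : Fin (m + 1) → R}

theorem eq_zero_of_vecMul_vandermonde_castSucc_eq_zero [IsDomain R] (hx : Function.Injective x)
    {r : Fin (m + 1) → R} (hr : ∀ k : Fin m, (r ᵥ* vandermonde x) k.castSucc = 0)
    {i : Fin (m + 1)} (hi : r i = 0) : r = 0 := by
  have hrest : r ∘ i.succAbove = 0 := by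
    refine eq_zero_of_forall_pow_sum_mul_pow_eq_zero
      (hx.comp (Fin.succAbove_right_injective (p := i))) fun k => ?_
    have hk := hr k
    rw [vecMul, dotProduct, Fin.sum_univ_succAbove _ i, hi, zero_mul, zero_add] at hk
    simpa [vandermonde_apply] using hk
  funext j
  rcases eq_or_ne j i with rfl | hj
  · exact hi
  · obtain ⟨j, rfl⟩ := Fin.exists_succAbove_eq hj
    exact congrFun hrest j

variable {F : Type*} [Field F] {x : Fin (m + 1) → F}

theorem inv_vandermonde_mul_vandermonde (hx : Function.Injective x) :
    (vandermonde x)⁻¹ * vandermonde x = 1 :=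
  nonsing_inv_mul _ (isUnit_iff_ne_zero.mpr (det_vandermonde_ne_zero_iff.mpr hx))

theorem inv_vandermonde_mul_submatrix_castSucc_last (hx : Function.Injective x) :
    ((vandermonde x)⁻¹ * (vandermonde x).submatrix id Fin.castSucc) (Fin.last m) = 0 := by
  rw [← submatrix_id_id (vandermonde x)⁻¹, ← submatrix_mul _ _ _ _ _ Function.bijective_id,
    inv_vandermonde_mul_vandermonde hx]
  funext k
  simp [(Fin.castSucc_lt_last k).ne']

theorem inv_vandermonde_last_apply_ne_zero (hx : Function.Injective x) (i : Fin (m + 1)) :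
    (vandermonde x)⁻¹ (Fin.last m) i ≠ 0 := by
  have hrow :
      (vandermonde x)⁻¹ (Fin.last m) ᵥ* vandermonde x = (1 : Matrix _ _ F) (Fin.last m) := by
    rw [← mul_apply_eq_vecMul, inv_vandermonde_mul_vandermonde hx]
  intro hi
  have hzero := eq_zero_of_vecMul_vandermonde_castSucc_eq_zero hx
    (fun k => by simp [hrow, (Fin.castSucc_lt_last k).ne']) hi
  simpa [hzero] using congrFun hrow (Fin.last m)

end Vandermonde

end Matrix

/-- Detection of a single perturbed row: with `C = U ⬝ B` the honest encoding (`U` the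
first `m` columns of the Vandermonde matrix `V`, `S = V⁻¹`), and `E` an error matrix
with exactly one nonzero row, if the last-row test on `C + E` passes then the last row
of `S ⬝ E` is zero; and in fact the test detects the error: `S_{m+1} ⬝ (C + E) ≠ 0`. -/
theorem testable_code_detects_single_row_error {F : Type*} [Field F] {m b : ℕ}
    (x : Fin (m + 1) → F) (hx : Function.Injective x)
    (S : Matrix (Fin (m + 1)) (Fin (m + 1)) F) (hS : S = (Matrix.vandermonde x)⁻¹)
    (U : Matrix (Fin (m + 1)) (Fin m) F) (hU : ∀ i j, U i j = x i ^ (j : ℕ))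
    (B : Matrix (Fin m) (Fin b) F)
    (C : Matrix (Fin (m + 1)) (Fin b) F) (hC : C = U * B)
    (E : Matrix (Fin (m + 1)) (Fin b) F) (hE : ∃! i, E i ≠ 0) :
    ((∀ j, (S * (C + E)) (Fin.last m) j = 0) → ∀ j, (S * E) (Fin.last m) j = 0) ∧
      (S * (C + E)) (Fin.last m) ≠ 0 := by
  have hUV : U = (vandermonde x).submatrix id Fin.castSucc := by
    ext i j
    simp [hU, vandermonde_apply]
  have hSC : (S * C) (Fin.last m) = 0 := by
    rw [hC, ← Matrix.mul_assoc, mul_apply_eq_vecMul, hS, hUV,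
      inv_vandermonde_mul_submatrix_castSucc_last hx, zero_vecMul]
  have htest : (S * (C + E)) (Fin.last m) = (S * E) (Fin.last m) := by
    funext j
    rw [Matrix.mul_add, Matrix.add_apply, congrFun hSC j, Pi.zero_apply, zero_add]
  obtain ⟨i₀, hi₀, huniq⟩ := hE
  have hSE : (S * E) (Fin.last m) = S (Fin.last m) i₀ • E i₀ :=
    mul_apply_eq_smul_of_forall_ne_row_eq_zero S (fun i hi => not_not.mp (mt (huniq i) hi)) _
  refine ⟨fun h j => htest ▸ h j, ?_⟩
  rw [htest, hSE]
  exact smul_ne_zero (hS ▸ inv_vandermonde_last_apply_ne_zero hx i₀) hi₀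
end
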